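/- The inequality Σ_{k=0}^{∞} N_k·2^{−(d+1)k} ≤ 4 + (1/C)·Σ_{k=0}^{∞} (I_k^+ − I_k^−) holds (as an inequality in [0,∞]). (This underlies part 2 of Theorem 3: the expected number of uses of the sup/inf oracle is at most 4C + 𝒜(f), where 𝒜(f) = Σ_{k=0}^{∞} (I_k^+ − I_k^−).) -/

import Mathlib

/-- The dyadic cube `R* = ∏_i [m_i·2^{-k}, (m_i+1)·2^{-k}]` of the level-`k` grid. -/
def dyadicCube (d k : ℕ) (m : Fin d → ℕ) : Set (Fin d → ℝ) :=
  {x | ∀ i, (m i : ℝ) / 2 ^ k ≤ x i ∧ x i ≤ ((m i : ℝ) + 1) / 2 ^ k}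

/-- The level-`k` cell `R* × [j·C·2^{-k}, (j+1)·C·2^{-k}]` is visited by `f` if
`sup_{R*} f ≥ j·C·2^{-k}` and `inf_{R*} f ≤ (j+1)·C·2^{-k}`. -/
def VisitedCell (d k : ℕ) (C : ℝ) (f : (Fin d → ℝ) → ℝ) (m : Fin d → ℕ) (j : ℕ) : Prop :=
  (j : ℝ) * C / 2 ^ k ≤ sSup (f '' dyadicCube d k m) ∧
    sInf (f '' dyadicCube d k m) ≤ ((j : ℝ) + 1) * C / 2 ^ k

/-- `N_k`, the number of level-`k` cells visited by `f`. -/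
noncomputable def Nvisited (d : ℕ) (C : ℝ) (f : (Fin d → ℝ) → ℝ) (k : ℕ) : ℕ :=
  {p : (Fin d → ℕ) × ℕ |
    (∀ i, p.1 i < 2 ^ k) ∧ p.2 < 2 ^ k ∧ VisitedCell d k C f p.1 p.2}.ncard

/-- The upper dyadic Darboux sum `I_k^+ = 2^{-dk} Σ_{R*} sup_{R*} f`. -/
noncomputable def Iplus (d : ℕ) (f : (Fin d → ℝ) → ℝ) (k : ℕ) : ℝ :=
  ((2 : ℝ) ^ (d * k))⁻¹ *
    ∑ m ∈ Fintype.piFinset (fun _ : Fin d => Finset.range (2 ^ k)),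
      sSup (f '' dyadicCube d k m)

/-- The lower dyadic Darboux sum `I_k^- = 2^{-dk} Σ_{R*} inf_{R*} f`. -/
noncomputable def Iminus (d : ℕ) (f : (Fin d → ℝ) → ℝ) (k : ℕ) : ℝ :=
  ((2 : ℝ) ^ (d * k))⁻¹ *
    ∑ m ∈ Fintype.piFinset (fun _ : Fin d => Finset.range (2 ^ k)),
      sInf (f '' dyadicCube d k m)

/-!
Above a level-`k` cube `R*` the visited cells form a column of height `C 2^{-k}` each, covering
`[inf_{R*} f, sup_{R*} f]`, so there are at most `2^k (sup - inf) / C + 2` of them. Summing over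
the `2^{dk}` cubes gives `N_k ≤ 2^{dk} (2 + 2^k (I_k^+ - I_k^-) / C)`; dividing by `2^{(d+1)k}`
and summing over `k`, the constant term contributes the geometric series `Σ 2·2^{-k} = 4`.
-/

open scoped ENNReal

lemma dyadicCube_nonempty (d k : ℕ) (m : Fin d → ℕ) : (dyadicCube d k m).Nonempty :=
  ⟨fun i => (m i : ℝ) / 2 ^ k,
    fun _ => ⟨le_rfl, div_le_div_of_nonneg_right (by linarith) (by positivity)⟩⟩

lemma dyadicCube_subset_Icc {d k : ℕ} {m : Fin d → ℕ} (hm : ∀ i, m i < 2 ^ k) :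
    dyadicCube d k m ⊆ Set.Icc 0 1 := by
  intro x hx
  refine ⟨fun i => le_trans (by positivity) (hx i).1, fun i => (hx i).2.trans ?_⟩
  rw [Pi.one_apply, div_le_one (by positivity)]
  exact_mod_cast hm i

lemma sInf_image_dyadicCube_le_sSup {d k : ℕ} {f : (Fin d → ℝ) → ℝ}
    (hbddBelow : BddBelow (f '' Set.Icc 0 1)) (hbddAbove : BddAbove (f '' Set.Icc 0 1))
    {m : Fin d → ℕ} (hm : ∀ i, m i < 2 ^ k) :
    sInf (f '' dyadicCube d k m) ≤ sSup (f '' dyadicCube d k m) :=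
  have hsub := Set.image_mono (f := f) (dyadicCube_subset_Icc hm)
  csInf_le_csSup ((dyadicCube_nonempty d k m).image f) (hbddBelow.mono hsub)
    (hbddAbove.mono hsub)

lemma card_filter_mul_le_le (s : Finset ℕ) {h S I : ℝ} (hh : 0 < h) (hIS : I ≤ S) :
    ((s.filter fun j : ℕ => j * h ≤ S ∧ I ≤ (j + 1) * h).card : ℝ) ≤
      (S - I) / h + 2 := by
  set T := s.filter fun j : ℕ => j * h ≤ S ∧ I ≤ (j + 1) * h
  rcases T.eq_empty_or_nonempty with hT | hT
  · rw [hT, Finset.card_empty, Nat.cast_zero]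
    have : 0 ≤ (S - I) / h := div_nonneg (by linarith) hh.le
    linarith
  set a := T.min' hT
  set b := T.max' hT
  have hab : a ≤ b := T.min'_le b (T.max'_mem hT)
  have hcard : (T.card : ℝ) ≤ b - a + 1 := by
    have : T.card ≤ b + 1 - a := by
      simpa using Finset.card_le_card fun x hx =>
        Finset.mem_Icc.mpr ⟨T.min'_le x hx, T.le_max' x hx⟩
    have : (T.card : ℝ) ≤ ((b + 1 - a : ℕ) : ℝ) := by exact_mod_cast this
    rwa [Nat.cast_sub (by omega), Nat.cast_add, Nat.cast_one, add_sub_right_comm] at this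
  have hb : (b : ℝ) * h ≤ S := (Finset.mem_filter.mp (T.max'_mem hT)).2.1
  have ha : I ≤ ((a : ℝ) + 1) * h := (Finset.mem_filter.mp (T.min'_mem hT)).2.2
  have hba : (b : ℝ) - a ≤ (S - I) / h + 1 := by
    rw [div_add_one hh.ne', le_div_iff₀ hh]
    linarith
  linarith

section VisitedCells

variable {d : ℕ} {f : (Fin d → ℝ) → ℝ}

lemma pow_mul_Iplus_sub_Iminus (k : ℕ) :
    (2 : ℝ) ^ (d * k) * (Iplus d f k - Iminus d f k) =
      ∑ m ∈ Fintype.piFinset (fun _ : Fin d => Finset.range (2 ^ k)),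
        (sSup (f '' dyadicCube d k m) - sInf (f '' dyadicCube d k m)) := by
  rw [Iplus, Iminus, ← mul_sub, ← Finset.sum_sub_distrib, ← mul_assoc,
    mul_inv_cancel₀ (by positivity), one_mul]

lemma Iminus_le_Iplus (hbddBelow : BddBelow (f '' Set.Icc 0 1))
    (hbddAbove : BddAbove (f '' Set.Icc 0 1)) (k : ℕ) :
    Iminus d f k ≤ Iplus d f k := by
  rw [← sub_nonneg, ← mul_nonneg_iff_of_pos_left (pow_pos two_pos (d * k)),
    pow_mul_Iplus_sub_Iminus]
  refine Finset.sum_nonneg fun m hm => sub_nonneg.mpr ?_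
  exact sInf_image_dyadicCube_le_sSup hbddBelow hbddAbove
    fun i => Finset.mem_range.mp (Fintype.mem_piFinset.mp hm i)

open Classical in
lemma Nvisited_eq_sum (C : ℝ) (k : ℕ) :
    Nvisited d C f k = ∑ m ∈ Fintype.piFinset (fun _ : Fin d => Finset.range (2 ^ k)),
      ((Finset.range (2 ^ k)).filter (VisitedCell d k C f m)).card := by
  have hset : {p : (Fin d → ℕ) × ℕ |
      (∀ i, p.1 i < 2 ^ k) ∧ p.2 < 2 ^ k ∧ VisitedCell d k C f p.1 p.2} =
      ↑((Fintype.piFinset (fun _ : Fin d => Finset.range (2 ^ k)) ×ˢ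
        Finset.range (2 ^ k)).filter fun p => VisitedCell d k C f p.1 p.2) := by
    ext p
    simp only [Set.mem_ofPred_eq, Finset.coe_filter, Finset.mem_product,
      Fintype.mem_piFinset, Finset.mem_range]
    tauto
  rw [Nvisited, hset, Set.ncard_coe_finset, Finset.card_filter, Finset.sum_product]
  exact Finset.sum_congr rfl fun m _ => (Finset.card_filter _ _).symm

lemma Nvisited_le (hbddBelow : BddBelow (f '' Set.Icc 0 1))
    (hbddAbove : BddAbove (f '' Set.Icc 0 1)) {C : ℝ} (hC : 0 < C) (k : ℕ) :
    (Nvisited d C f k : ℝ) ≤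
      2 ^ (d * k) * (2 + 2 ^ k / C * (Iplus d f k - Iminus d f k)) := by
  classical
  have hcolumn : ∀ m ∈ Fintype.piFinset (fun _ : Fin d => Finset.range (2 ^ k)),
      (((Finset.range (2 ^ k)).filter (VisitedCell d k C f m)).card : ℝ) ≤
        (sSup (f '' dyadicCube d k m) - sInf (f '' dyadicCube d k m)) / (C / 2 ^ k) + 2 := by
    intro m hm
    rw [Finset.filter_congr fun j _ => by rw [VisitedCell, mul_div_assoc, mul_div_assoc]]
    exact card_filter_mul_le_le _ (by positivity) (sInf_image_dyadicCube_le_sSup hbddBelow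
      hbddAbove fun i => Finset.mem_range.mp (Fintype.mem_piFinset.mp hm i))
  have hcubes : ((Fintype.piFinset (fun _ : Fin d => Finset.range (2 ^ k))).card : ℝ) =
      2 ^ (d * k) := by
    simp [Fintype.card_piFinset, ← pow_mul, mul_comm k d]
  calc (Nvisited d C f k : ℝ)
      ≤ ∑ m ∈ Fintype.piFinset (fun _ : Fin d => Finset.range (2 ^ k)),
          ((sSup (f '' dyadicCube d k m) - sInf (f '' dyadicCube d k m)) / (C / 2 ^ k) + 2) := by
        rw [Nvisited_eq_sum, Nat.cast_sum]
        exact Finset.sum_le_sum hcolumn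
    _ = 2 ^ (d * k) * (2 + 2 ^ k / C * (Iplus d f k - Iminus d f k)) := by
        rw [Finset.sum_add_distrib, Finset.sum_const, nsmul_eq_mul, hcubes, ← Finset.sum_div,
          ← pow_mul_Iplus_sub_Iminus]
        field_simp
        ring

lemma Nvisited_div_le (hbddBelow : BddBelow (f '' Set.Icc 0 1))
    (hbddAbove : BddAbove (f '' Set.Icc 0 1)) {C : ℝ} (hC : 0 < C) (k : ℕ) :
    (Nvisited d C f k : ℝ≥0∞) / 2 ^ ((d + 1) * k) ≤
      2 * 2⁻¹ ^ k + ENNReal.ofReal (1 / C) * ENNReal.ofReal (Iplus d f k - Iminus d f k) := by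
  have hgap := sub_nonneg.mpr (Iminus_le_Iplus hbddBelow hbddAbove k)
  have hreal : (Nvisited d C f k : ℝ) / 2 ^ ((d + 1) * k) ≤
      2 * 2⁻¹ ^ k + 1 / C * (Iplus d f k - Iminus d f k) := by
    rw [div_le_iff₀ (by positivity), add_one_mul, pow_add]
    refine (Nvisited_le hbddBelow hbddAbove hC k).trans (le_of_eq ?_)
    rw [inv_pow]
    field_simp
  calc (Nvisited d C f k : ℝ≥0∞) / 2 ^ ((d + 1) * k)
      = ENNReal.ofReal ((Nvisited d C f k : ℝ) / 2 ^ ((d + 1) * k)) := by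
        rw [ENNReal.ofReal_div_of_pos (by positivity), ENNReal.ofReal_natCast,
          ENNReal.ofReal_pow zero_le_two, ENNReal.ofReal_ofNat]
    _ ≤ ENNReal.ofReal (2 * 2⁻¹ ^ k + 1 / C * (Iplus d f k - Iminus d f k)) :=
        ENNReal.ofReal_le_ofReal hreal
    _ = 2 * 2⁻¹ ^ k + ENNReal.ofReal (1 / C) * ENNReal.ofReal (Iplus d f k - Iminus d f k) := by
        rw [ENNReal.ofReal_add (by positivity) (mul_nonneg (by positivity) hgap),
          ENNReal.ofReal_mul zero_le_two, ENNReal.ofReal_pow (by norm_num),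
          ENNReal.ofReal_inv_of_pos two_pos,
          ENNReal.ofReal_ofNat, ENNReal.ofReal_mul (by positivity)]

end VisitedCells

theorem stmt10_general (d : ℕ) (C : ℝ) (hC : 0 < C)
    (f : (Fin d → ℝ) → ℝ)
    (hf : ∀ x ∈ Set.Icc (0 : Fin d → ℝ) 1, f x ∈ Set.Icc 0 C) :
    ∑' k : ℕ, (Nvisited d C f k : ℝ≥0∞) / 2 ^ ((d + 1) * k) ≤
      4 + ENNReal.ofReal (1 / C) *
        ∑' k : ℕ, ENNReal.ofReal (Iplus d f k - Iminus d f k) := by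
  have hbddBelow : BddBelow (f '' Set.Icc 0 1) :=
    ⟨0, Set.forall_mem_image.mpr fun x hx => (hf x hx).1⟩
  have hbddAbove : BddAbove (f '' Set.Icc 0 1) :=
    ⟨C, Set.forall_mem_image.mpr fun x hx => (hf x hx).2⟩
  have hgeometric : ∑' k : ℕ, 2 * (2⁻¹ : ℝ≥0∞) ^ k = 4 := by
    rw [ENNReal.tsum_mul_left, ENNReal.tsum_geometric, ENNReal.one_sub_inv_two, inv_inv]
    norm_num
  calc ∑' k : ℕ, (Nvisited d C f k : ℝ≥0∞) / 2 ^ ((d + 1) * k)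
      ≤ ∑' k : ℕ, (2 * 2⁻¹ ^ k +
          ENNReal.ofReal (1 / C) * ENNReal.ofReal (Iplus d f k - Iminus d f k)) :=
        ENNReal.tsum_le_tsum (Nvisited_div_le hbddBelow hbddAbove hC)
    _ = 4 + ENNReal.ofReal (1 / C) * ∑' k : ℕ, ENNReal.ofReal (Iplus d f k - Iminus d f k) := by
        rw [ENNReal.tsum_add, hgeometric, ENNReal.tsum_mul_left]

/-- behind Theorem 3, part 2: as an inequality in `[0,∞]`,
`Σ_k N_k·2^{-(d+1)k} ≤ 4 + (1/C)·Σ_k (I_k^+ - I_k^-)`. -/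
theorem stmt10 (d : ℕ) (hd : 1 ≤ d) (C : ℝ) (hC : 0 < C)
    (f : (Fin d → ℝ) → ℝ)
    (hf : ∀ x ∈ Set.Icc (0 : Fin d → ℝ) 1, f x ∈ Set.Icc 0 C) :
    ∑' k : ℕ, (Nvisited d C f k : ℝ≥0∞) / 2 ^ ((d + 1) * k) ≤
      4 + ENNReal.ofReal (1 / C) *
        ∑' k : ℕ, ENNReal.ofReal (Iplus d f k - Iminus d f k) :=
  stmt10_general d C hC f hf
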